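/- arXiv:1306.3119 — 2 statements merged into one kernel-verified Lean document; each statement's English description precedes it below -/
import Mathlib

section
/- Let n be even. In the directed graph whose vertices are the subsets S of an n-element set U with |S| even and {u_1,...,u_{|S|/2}} ⊆ S, and with arcs (S₁, S₂) whenever S₁ ⊆ S₂ and |S₁| + 2 = |S₂|, every directed path from ∅ to U determines a perfect matching of the complete graph K_n on U: the arc (S₁, S₂) contributes the edge joining the two elements of S₂ \ S₁. Moreover, every perfect matching of K_n arises from at least one such path. -/
/-- A perfect matching of the complete graph `K_n` on `Fin n`, encoded as a
fixed-point-free involution. -/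
def IsPerfectMatchingKn (n : ℕ) (m : Fin n → Fin n) : Prop :=
  (∀ x, m (m x) = x) ∧ ∀ x, m x ≠ x

/-- Nodes of the nonbipartite matching network: subsets `S ⊆ U = {u_1, …, u_n}`
with `|S| = 2k` even and `{u_1, …, u_k} ⊆ S` (here `u_{i+1}` is `i : Fin n`). -/
def MatchNetworkNode (n : ℕ) (S : Finset (Fin n)) : Prop :=
  Even S.card ∧ ∀ i : Fin n, 2 * ((i : ℕ) + 1) ≤ S.card → i ∈ S

/-- A directed path from `∅` to `U` in the nonbipartite matching network:
a chain of nodes, each obtained from the previous one by adding two elements. -/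
def MatchNetworkPath (n : ℕ) (c : Fin (n / 2 + 1) → Finset (Fin n)) : Prop :=
  c 0 = ∅ ∧ c (Fin.last (n / 2)) = Finset.univ ∧
  (∀ j, MatchNetworkNode n (c j)) ∧
  ∀ j : Fin (n / 2), c j.castSucc ⊆ c j.succ ∧ (c j.castSucc).card + 2 = (c j.succ).card

/-- Let `n` be even. Every directed path from `∅` to `U` in the nonbipartite matching
network determines a perfect matching of `K_n`: each arc `(S₁, S₂)` contributes the
edge joining the two elements of `S₂ \ S₁` (i.e. the matching maps `S₂ \ S₁` to itself).
Moreover, every perfect matching of `K_n` arises from at least one such path. -/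
theorem stmt7 (n : ℕ) (hn : Even n) :
    (∀ c : Fin (n / 2 + 1) → Finset (Fin n), MatchNetworkPath n c →
      ∃ m : Fin n → Fin n, IsPerfectMatchingKn n m ∧
        ∀ j : Fin (n / 2), ∀ x ∈ c j.succ \ c j.castSucc, m x ∈ c j.succ \ c j.castSucc) ∧
    (∀ m : Fin n → Fin n, IsPerfectMatchingKn n m →
      ∃ c : Fin (n / 2 + 1) → Finset (Fin n), MatchNetworkPath n c ∧
        ∀ j : Fin (n / 2), ∀ x ∈ c j.succ \ c j.castSucc, m x ∈ c j.succ \ c j.castSucc) := by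
  classical
  have hnn : n = 2 * (n / 2) := (Nat.two_mul_div_two_of_even hn).symm
  set N := n / 2 with hN
  constructor
  · -- Direction 1: a path yields a matching
    intro c hc
    obtain ⟨h0, hlast, hnode, hstep⟩ := hc
    set P : Fin N → Finset (Fin n) := fun j => c j.succ \ c j.castSucc with hP
    have hPcard : ∀ j, (P j).card = 2 := by
      intro j
      have := (hstep j).2
      rw [hP]
      simp only
      rw [Finset.card_sdiff_of_subset (hstep j).1]
      omega
    -- monotonicity of the chain
    have mono : ∀ t : ℕ, ∀ a b : Fin (N + 1), (b : ℕ) = (a : ℕ) + t → c a ⊆ c b := by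
      intro t
      induction t with
      | zero =>
        intro a b h
        have : a = b := Fin.ext (by omega)
        rw [this]
      | succ t ih =>
        intro a b h
        have hb : (b : ℕ) < N + 1 := b.isLt
        have hmid : (a : ℕ) + t < N + 1 := by omega
        have h1 := ih a ⟨(a : ℕ) + t, hmid⟩ rfl
        have hj : (a : ℕ) + t < N := by omega
        have h2 := (hstep ⟨(a : ℕ) + t, hj⟩).1
        have e1 : (⟨(a : ℕ) + t, hj⟩ : Fin N).castSucc = ⟨(a : ℕ) + t, hmid⟩ := rfl
        have e2 : (⟨(a : ℕ) + t, hj⟩ : Fin N).succ = b :=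
          Fin.ext (by show (a : ℕ) + t + 1 = (b : ℕ); omega)
        rw [e1, e2] at h2
        exact h1.trans h2
    have mono' : ∀ a b : Fin (N + 1), a ≤ b → c a ⊆ c b := by
      intro a b hab
      exact mono ((b : ℕ) - (a : ℕ)) a b (by omega)
    -- disjointness of the pairs
    have hdisj : ∀ j k : Fin N, j ≠ k → Disjoint (P j) (P k) := by
      have key : ∀ j k : Fin N, j < k → Disjoint (P j) (P k) := by
        intro j k hjk
        have hsub : c j.succ ⊆ c k.castSucc := by
          apply mono'
          rw [Fin.le_def]
          rw [Fin.lt_def] at hjk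
          simp only [Fin.val_succ, Fin.coe_castSucc]
          omega
        have h1 : P j ⊆ c k.castSucc := (Finset.sdiff_subset).trans hsub
        intro s hs1 hs2 x hx
        have hx1 := hs1 hx
        have hx2 := hs2 hx
        exact (((Finset.mem_sdiff.mp hx2).2) (h1 hx1)).elim
      intro j k hjk
      rcases lt_or_gt_of_ne hjk with h | h
      · exact key j k h
      · exact (key k j h).symm
    -- each element lies in some pair
    have hmem : ∀ x : Fin n, ∃ j : Fin N, x ∈ P j := by
      intro x
      have main : ∀ b : ℕ, ∀ hb : b ≤ N, x ∈ c ⟨b, by omega⟩ → ∃ j : Fin N, x ∈ P j := by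
        intro b
        induction b with
        | zero =>
          intro hb hx
          have e : (⟨0, by omega⟩ : Fin (N + 1)) = 0 := rfl
          rw [e, h0] at hx
          simp at hx
        | succ b ih =>
          intro hb hx
          by_cases hxb : x ∈ c ⟨b, by omega⟩
          · exact ih (by omega) hxb
          · have hj : b < N := by omega
            refine ⟨⟨b, hj⟩, ?_⟩
            rw [hP]
            simp only
            rw [Finset.mem_sdiff]
            have e1 : (⟨b, hj⟩ : Fin N).castSucc = ⟨b, by omega⟩ := rfl
            have e2 : (⟨b, hj⟩ : Fin N).succ = ⟨b + 1, by omega⟩ := rfl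
            rw [e1, e2]
            exact ⟨hx, hxb⟩
      have hxlast : x ∈ c (Fin.last N) := by rw [hlast]; exact Finset.mem_univ x
      have e : Fin.last N = ⟨N, by omega⟩ := rfl
      rw [e] at hxlast
      exact main N le_rfl hxlast
    choose jf hjf using hmem
    -- the chosen pair is the unique one
    have huniq : ∀ (x : Fin n) (j : Fin N), x ∈ P j → jf x = j := by
      intro x j hx
      by_contra hne
      have := hdisj (jf x) j hne
      have : x ∉ P j := Finset.disjoint_left.mp this (hjf x)
      exact this hx
    -- define the matching
    have herase : ∀ x : Fin n, ((P (jf x)).erase x).Nonempty := by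
      intro x
      rw [← Finset.card_pos, Finset.card_erase_of_mem (hjf x), hPcard]
      norm_num
    set m : Fin n → Fin n := fun x => ((P (jf x)).erase x).min' (herase x) with hm
    have hmmem : ∀ x, m x ∈ (P (jf x)).erase x := fun x => Finset.min'_mem _ _
    have hmx : ∀ x, m x ∈ P (jf x) := fun x => Finset.mem_of_mem_erase (hmmem x)
    have hmne : ∀ x, m x ≠ x := fun x => Finset.ne_of_mem_erase (hmmem x)
    have hpair : ∀ x, P (jf x) = {x, m x} := by
      intro x
      symm
      apply Finset.eq_of_subset_of_card_le
      · intro y hy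
        simp only [Finset.mem_insert, Finset.mem_singleton] at hy
        rcases hy with h | h
        · rw [h]; exact hjf x
        · rw [h]; exact hmx x
      · have hxnot : x ∉ ({m x} : Finset (Fin n)) := by
          simp only [Finset.mem_singleton]
          exact fun h => hmne x h.symm
        rw [hPcard, Finset.card_insert_of_notMem hxnot, Finset.card_singleton]
    have hinv : ∀ x, m (m x) = x := by
      intro x
      have h1 : jf (m x) = jf x := huniq (m x) (jf x) (hmx x)
      have h2 : m (m x) ∈ (P (jf (m x))).erase (m x) := hmmem (m x)
      rw [h1, hpair x] at h2
      have := Finset.mem_of_mem_erase h2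
      simp only [Finset.mem_insert, Finset.mem_singleton] at this
      rcases this with h | h
      · exact h
      · exact absurd h (Finset.ne_of_mem_erase h2)
    refine ⟨m, ⟨hinv, hmne⟩, ?_⟩
    intro j x hx
    have hj : jf x = j := huniq x j hx
    have hmem' := hmx x
    rw [hj] at hmem'
    exact hmem'
  · -- Direction 2: a matching yields a path
    intro m hm
    obtain ⟨hinv, hfpf⟩ := hm
    set g : Finset (Fin n) → Finset (Fin n) := fun s =>
      if h : sᶜ.Nonempty then insert (m (sᶜ.min' h)) (insert (sᶜ.min' h) s) else s with hg
    set f : ℕ → Finset (Fin n) := fun k => g^[k] ∅ with hf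
    have hf0 : f 0 = ∅ := rfl
    have hfsucc : ∀ k, f (k + 1) = g (f k) := by
      intro k
      rw [hf]
      simp [Function.iterate_succ_apply']
    -- invariant
    have inv : ∀ k, k ≤ N →
        (f k).card = 2 * k ∧ (∀ x ∈ f k, m x ∈ f k) ∧ ∀ i : Fin n, (i : ℕ) < k → i ∈ f k := by
      intro k
      induction k with
      | zero => intro _; simp [hf0]
      | succ k ih =>
        intro hk
        obtain ⟨hcard, hclosed, hpre⟩ := ih (by omega)
        have hlt : (f k).card < n := by omega
        have hne : ((f k)ᶜ).Nonempty := by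
          rw [← Finset.card_pos, Finset.card_compl]
          simp only [Fintype.card_fin]
          omega
        set a := ((f k)ᶜ).min' hne with ha
        have hastep : f (k + 1) = insert (m a) (insert a (f k)) := by
          rw [hfsucc, hg]
          simp only
          rw [dif_pos hne]
        have hanot : a ∉ f k := by
          have := Finset.min'_mem ((f k)ᶜ) hne
          rwa [Finset.mem_compl] at this
        have hmanot : m a ∉ f k := by
          intro hcon
          have := hclosed (m a) hcon
          rw [hinv a] at this
          exact hanot this
        have hma_ne : m a ≠ a := hfpf a
        have hcard' : (f (k + 1)).card = 2 * (k + 1) := by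
          rw [hastep, Finset.card_insert_of_notMem (by
            simp only [Finset.mem_insert]
            push_neg
            exact ⟨hma_ne, hmanot⟩),
            Finset.card_insert_of_notMem hanot, hcard]
          omega
        refine ⟨hcard', ?_, ?_⟩
        · intro x hx
          rw [hastep] at hx ⊢
          simp only [Finset.mem_insert] at hx ⊢
          rcases hx with rfl | rfl | hx
          · right; left; exact hinv a
          · left; rfl
          · right; right; exact hclosed x hx
        · intro i hi
          rw [hastep]
          simp only [Finset.mem_insert]
          by_cases hik : (i : ℕ) < k
          · right; right; exact hpre i hik
          · have hik' : (i : ℕ) = k := by omega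
            by_cases hifk : i ∈ f k
            · right; right; exact hifk
            · -- a = i
              have hia : a ≤ i := Finset.min'_le _ _ (Finset.mem_compl.mpr hifk)
              have hka : k ≤ (a : ℕ) := by
                by_contra hcon
                push_neg at hcon
                exact hanot (hpre a hcon)
              have : a = i := Fin.ext (by
                have := hia
                rw [Fin.le_def] at this
                omega)
              right; left; exact this.symm
    -- build the path
    refine ⟨fun j => f (j : ℕ), ?_, ?_⟩
    · refine ⟨hf0, ?_, ?_, ?_⟩
      · -- last is univ
        show f ((Fin.last N : Fin (N + 1)) : ℕ) = Finset.univ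
        apply Finset.eq_univ_of_card
        rw [Fin.val_last, (inv N le_rfl).1, Fintype.card_fin]
        omega
      · intro j
        have hj : (j : ℕ) ≤ N := by omega
        obtain ⟨hcard, _, hpre⟩ := inv (j : ℕ) hj
        constructor
        · rw [hcard]; exact even_two_mul _
        · intro i hi
          rw [hcard] at hi
          exact hpre i (by omega)
      · intro j
        show f ((j.castSucc : Fin (N + 1)) : ℕ) ⊆ f ((j.succ : Fin (N + 1)) : ℕ) ∧
          (f ((j.castSucc : Fin (N + 1)) : ℕ)).card + 2 = (f ((j.succ : Fin (N + 1)) : ℕ)).card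
        have hcs : ((j.castSucc : Fin (N + 1)) : ℕ) = (j : ℕ) := rfl
        have hs : ((j.succ : Fin (N + 1)) : ℕ) = (j : ℕ) + 1 := rfl
        rw [hcs, hs]
        have hjN : (j : ℕ) < N := j.isLt
        obtain ⟨hcard, hclosed, _⟩ := inv (j : ℕ) (by omega)
        obtain ⟨hcard', _, _⟩ := inv ((j : ℕ) + 1) (by omega)
        have hne : ((f (j : ℕ))ᶜ).Nonempty := by
          rw [← Finset.card_pos, Finset.card_compl]
          simp only [Fintype.card_fin]
          omega
        have hastep : f ((j : ℕ) + 1) = insert (m (((f (j : ℕ))ᶜ).min' hne))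
            (insert (((f (j : ℕ))ᶜ).min' hne) (f (j : ℕ))) := by
          rw [hfsucc, hg]
          simp only
          rw [dif_pos hne]
        constructor
        · rw [hastep]
          intro x hx
          simp only [Finset.mem_insert]
          right; right; exact hx
        · rw [hcard, hcard']; omega
    · intro j x hx
      replace hx : x ∈ f ((j : ℕ) + 1) \ f (j : ℕ) := hx
      show m x ∈ f ((j : ℕ) + 1) \ f (j : ℕ)
      have hjN : (j : ℕ) < N := j.isLt
      obtain ⟨hcard, hclosed, _⟩ := inv (j : ℕ) (by omega)
      have hne : ((f (j : ℕ))ᶜ).Nonempty := by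
        rw [← Finset.card_pos, Finset.card_compl]
        simp only [Fintype.card_fin]
        omega
      set a := ((f (j : ℕ))ᶜ).min' hne with ha
      have hastep : f ((j : ℕ) + 1) = insert (m a) (insert a (f (j : ℕ))) := by
        rw [hfsucc, hg]
        simp only
        rw [dif_pos hne]
      have hanot : a ∉ f (j : ℕ) := by
        have := Finset.min'_mem ((f (j : ℕ))ᶜ) hne
        rwa [Finset.mem_compl] at this
      have hmanot : m a ∉ f (j : ℕ) := by
        intro hcon
        have := hclosed (m a) hcon
        rw [hinv a] at this
        exact hanot this
      rw [Finset.mem_sdiff, hastep] at hx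
      obtain ⟨hx1, hx2⟩ := hx
      simp only [Finset.mem_insert] at hx1
      rw [Finset.mem_sdiff, hastep]
      rcases hx1 with rfl | rfl | hx1
      · constructor
        · simp only [Finset.mem_insert]
          right; left; exact hinv a
        · rw [hinv a]; exact hanot
      · constructor
        · simp only [Finset.mem_insert]
          left; trivial
        · exact hmanot
      · exact absurd hx1 hx2
end

section
/- Let N = (V, A) be a finite acyclic directed graph with vertices s ≠ t, let π : ℝ^A → ℝ^d be linear, let c ∈ ℝ^d be a row vector and δ ∈ ℝ. Suppose every vertex of N lies on some directed s–t path, and suppose c·π(χ^σ) = δ for every directed s–t path σ. Then for every vertex v there is a unique ε_v ∈ ℝ such that c·π(χ^σ) = ε_v for every directed s–v path σ. -/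
/-- `IsWalk tail head u v p` says that the list of arcs `p` forms a directed walk
from `u` to `v` in the directed graph given by `tail`/`head`. -/
def IsWalk {V A : Type*} (tail head : A → V) : V → V → List A → Prop
  | u, v, [] => u = v
  | u, v, a :: p => tail a = u ∧ IsWalk tail head (head a) v p

lemma IsWalk.append {V A : Type*} (tail head : A → V) :
    ∀ {u v w : V} {p q : List A}, IsWalk tail head u v p → IsWalk tail head v w q →
      IsWalk tail head u w (p ++ q) := by
  intro u v w p
  induction p generalizing u with
  | nil => intro q hp hq; cases hp; exact hq
  | cons a p ih => intro q hp hq; exact ⟨hp.1, ih hp.2 hq⟩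

lemma val_append {A : Type*} [Fintype A] [DecidableEq A]
    (d : ℕ) (π : Matrix (Fin d) A ℝ) (c : Fin d → ℝ) (p q : List A) :
    ∑ i, c i * ∑ a, π i a * ((p ++ q).count a : ℝ) =
      (∑ i, c i * ∑ a, π i a * (p.count a : ℝ)) +
        ∑ i, c i * ∑ a, π i a * (q.count a : ℝ) := by
  rw [← Finset.sum_add_distrib]
  refine Finset.sum_congr rfl fun i _ => ?_
  rw [← mul_add, ← Finset.sum_add_distrib]
  congr 1
  refine Finset.sum_congr rfl fun a _ => ?_
  rw [List.count_append]
  push_cast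
  ring

/-- Potential lemma: let `N = (V, A)` be a finite acyclic directed graph with `s ≠ t`,
`π : ℝ^A → ℝ^d` linear, `c ∈ ℝ^d` a row vector and `δ ∈ ℝ`. If every vertex lies on
some directed `s`–`t` path, and `c·π(χ^σ) = δ` for every directed `s`–`t` path `σ`,
then for every vertex `v` there is a unique `ε_v ∈ ℝ` with `c·π(χ^σ) = ε_v` for every
directed `s`–`v` path `σ`. -/
theorem stmt13 {V A : Type*} [Fintype A] [DecidableEq A]
    (tail head : A → V) (s t : V) (hst : s ≠ t)
    (hacyc : ∀ (v : V) (p : List A), IsWalk tail head v v p → p = [])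
    (hcover : ∀ v : V, ∃ p q : List A, IsWalk tail head s v p ∧ IsWalk tail head v t q)
    (d : ℕ) (π : Matrix (Fin d) A ℝ) (c : Fin d → ℝ) (δ : ℝ)
    (hval : ∀ σ : List A, IsWalk tail head s t σ →
      ∑ i, c i * ∑ a, π i a * (σ.count a : ℝ) = δ) :
    ∀ v : V, ∃! ε : ℝ, ∀ σ : List A, IsWalk tail head s v σ →
      ∑ i, c i * ∑ a, π i a * (σ.count a : ℝ) = ε := by
  intro v
  obtain ⟨p, q, hp, hq⟩ := hcover v
  refine ⟨δ - ∑ i, c i * ∑ a, π i a * (q.count a : ℝ), fun σ hσ => ?_, fun ε' hε' => ?_⟩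
  · have h := hval (σ ++ q) (IsWalk.append tail head hσ hq)
    rw [val_append] at h
    linarith
  · have h := hval (p ++ q) (IsWalk.append tail head hp hq)
    rw [val_append] at h
    rw [← hε' p hp]
    linarith
end
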